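/- With u, σ, Φ as in the separated-bump example (u = Σ_{n≥2} n² log(e+n)^{-3} χ_{(eⁿ+n−1, eⁿ+n)}, σ = Σ_{n≥2} χ_{(eⁿ, eⁿ+1)}, Φ(t)=t log(e+t)²), there is a constant C such that for every bounded interval Q ⊂ ℝ: ‖u‖_{Φ,Q} · (|Q|^{-1} ∫_Q σ dx) ≤ C. That is, the separated bump quantity sup_Q ‖u‖_{Φ,Q} ‖σ‖_{1,Q} is finite. -/

import Mathlib

open MeasureTheory Real Set Filter

/-!
The `n`-th blocks of `u` and of `σ` both lie in the window `(eⁿ, eⁿ + n)`, and these windows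
grow geometrically, so an interval `Q = (a, b)` with `|Q| < b / 4` meets at most one of them. If
such a short `Q` meets both blocks of index `n`, it spans the gap between them, so `n < |Q| + 2`;
then `∫_Q Φ(u) ≤ 4n² min(1, |Q|)` and `∫_Q σ ≤ min(1, |Q|)`. A long `Q` only sees blocks with
`n ≤ log b`, on which `Φ(u) ≤ 4 (log b)²`, and they cover at most `log b` of `Q`; as
`(log b)³ ≤ 6b ≤ 24|Q|`, in both cases `(∫_Q Φ(u)) (∫_Q σ) ≤ 96 |Q|²`. Finally
`Φ(t / λ) ≤ Φ(t) / λ` for `λ ≥ 1` gives `‖u‖_{Φ,Q} ≤ max(1, 96 |Q| / ∫_Q σ)`.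
-/

/-- The normalized Luxemburg (Orlicz) norm of `v` over the set `E`:
`inf { λ > 0 : μ(E)⁻¹ ∫_E A(|v|/λ) dμ ≤ 1 }`. -/
noncomputable def luxNorm {X : Type*} [MeasurableSpace X] (μ : Measure X)
    (A : ℝ → ℝ) (E : Set X) (v : X → ℝ) : ℝ :=
  sInf {l : ℝ | 0 < l ∧ ∫⁻ x in E, ENNReal.ofReal (A (|v x| / l)) ∂μ ≤ μ E}

/-- A Young function: continuous, convex, increasing on `[0,∞)`, vanishing at `0`,
with superlinear growth at infinity. -/
def IsYoung (A : ℝ → ℝ) : Prop :=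
  ContinuousOn A (Set.Ici 0) ∧ ConvexOn ℝ (Set.Ici 0) A ∧ MonotoneOn A (Set.Ici 0) ∧
    A 0 = 0 ∧ Filter.Tendsto (fun t => A t / t) Filter.atTop Filter.atTop

/-- The weight `u = Σ_{n≥2} n² log(e+n)⁻³ χ_{(eⁿ+n−1, eⁿ+n)}`. -/
noncomputable def exU : ℝ → ℝ := fun x =>
  ∑' n : ℕ, if 2 ≤ n then
    Set.indicator (Set.Ioo (Real.exp n + n - 1) (Real.exp n + n))
      (fun _ => (n : ℝ) ^ 2 / Real.log (Real.exp 1 + n) ^ 3) x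
  else 0

/-- The weight `σ = Σ_{n≥2} χ_{(eⁿ, eⁿ+1)}`. -/
noncomputable def exSigma : ℝ → ℝ := fun x =>
  ∑' n : ℕ, if 2 ≤ n then
    Set.indicator (Set.Ioo (Real.exp n) (Real.exp n + 1)) (fun _ => (1 : ℝ)) x
  else 0

/-- The log-bump `Φ(t) = t log(e+t)²`. -/
noncomputable def exPhi : ℝ → ℝ := fun t => t * Real.log (Real.exp 1 + t) ^ 2

theorem luxNorm_le_of_lintegral_le {X : Type*} [MeasurableSpace X] {μ : Measure X}
    {A : ℝ → ℝ} {E : Set X} {v : X → ℝ} {l : ℝ}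
    (hA : ∀ t, 0 ≤ t → ∀ s, 1 ≤ s → A (t / s) ≤ A t / s) (hl : 1 ≤ l)
    (h : ∫⁻ x in E, ENNReal.ofReal (A |v x|) ∂μ ≤ ENNReal.ofReal l * μ E) :
    luxNorm μ A E v ≤ l := by
  have hl0 : 0 < l := by linarith
  refine csInf_le ⟨0, fun _ hs => hs.1.le⟩ ⟨hl0, ?_⟩
  calc ∫⁻ x in E, ENNReal.ofReal (A (|v x| / l)) ∂μ
      ≤ ∫⁻ x in E, (ENNReal.ofReal l)⁻¹ * ENNReal.ofReal (A |v x|) ∂μ := by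
        refine lintegral_mono fun x => ?_
        rw [← ENNReal.div_eq_inv_mul, ← ENNReal.ofReal_div_of_pos hl0]
        exact ENNReal.ofReal_le_ofReal (hA _ (abs_nonneg _) _ hl)
    _ = (ENNReal.ofReal l)⁻¹ * ∫⁻ x in E, ENNReal.ofReal (A |v x|) ∂μ :=
        lintegral_const_mul' _ _ (by simp [hl0])
    _ ≤ μ E := by
        rw [← ENNReal.div_eq_inv_mul, ENNReal.div_le_iff (by simp [hl0]) (by simp), mul_comm]
        exact h

theorem setLIntegral_ofReal_le_mul {α : Type*} [MeasurableSpace α] {μ : Measure α}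
    {f : α → ℝ} {E U : Set α} {c : ℝ} (hU : MeasurableSet U)
    (hf : ∀ x ∈ E, f x ≤ c) (hfU : ∀ x ∈ E, x ∉ U → f x ≤ 0) :
    ∫⁻ x in E, ENNReal.ofReal (f x) ∂μ ≤ ENNReal.ofReal c * μ (U ∩ E) := by
  calc ∫⁻ x in E, ENNReal.ofReal (f x) ∂μ
      ≤ ∫⁻ x in E, U.indicator (fun _ => ENNReal.ofReal c) x ∂μ := by
        refine setLIntegral_mono (measurable_const.indicator hU) fun x hx => ?_
        by_cases hxU : x ∈ U
        · rw [indicator_of_mem hxU]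
          exact ENNReal.ofReal_le_ofReal (hf x hx)
        · rw [indicator_of_notMem hxU, nonpos_iff_eq_zero, ENNReal.ofReal_eq_zero]
          exact hfU x hx hxU
    _ = ENNReal.ofReal c * μ (U ∩ E) := by
        rw [lintegral_indicator_const hU, Measure.restrict_apply hU]

theorem volume_Ioo_inter_Ioo_le (a b c d : ℝ) :
    volume (Ioo c d ∩ Ioo a b) ≤ ENNReal.ofReal (min (d - c) (b - a)) := by
  rw [ENNReal.ofReal_min, ← Real.volume_Ioo, ← Real.volume_Ioo]
  exact le_min (measure_mono inter_subset_left) (measure_mono inter_subset_right)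

theorem tsum_ite_indicator_of_mem {α : Type*} {s : ℕ → Set α} {c : ℕ → ℝ} {k n : ℕ} {x : α}
    (hs : ∀ m, k ≤ m → x ∈ s m → m = n) (hn : k ≤ n) (hx : x ∈ s n) :
    ∑' m, (if k ≤ m then (s m).indicator (fun _ => c m) x else 0) = c n := by
  rw [tsum_eq_single n, if_pos hn, indicator_of_mem hx]
  intro m hmn
  split_ifs with hm
  · exact indicator_of_notMem (fun hxm => hmn (hs m hm hxm)) _
  · rfl

theorem tsum_ite_indicator_of_forall_notMem {α : Type*} {s : ℕ → Set α} {c : ℕ → ℝ} {k : ℕ}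
    {x : α} (hx : ∀ m, k ≤ m → x ∉ s m) :
    ∑' m, (if k ≤ m then (s m).indicator (fun _ => c m) x else 0) = 0 := by
  refine (tsum_congr fun m => ?_).trans tsum_zero
  split_ifs with hm
  · exact indicator_of_notMem (hx m hm) _
  · rfl

theorem one_le_log_exp_one_add {t : ℝ} (ht : 0 ≤ t) : 1 ≤ log (exp 1 + t) := by
  rw [le_log_iff_exp_le (by positivity)]
  linarith

theorem exPhi_zero : exPhi 0 = 0 := by simp [exPhi]

theorem exPhi_div_le {t s : ℝ} (ht : 0 ≤ t) (hs : 1 ≤ s) : exPhi (t / s) ≤ exPhi t / s := by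
  have hts : t / s ≤ t := div_le_self ht hs
  have hlog : 1 ≤ log (exp 1 + t / s) := one_le_log_exp_one_add (by positivity)
  have hmono : log (exp 1 + t / s) ≤ log (exp 1 + t) := log_le_log (by positivity) (by linarith)
  calc exPhi (t / s) ≤ t / s * log (exp 1 + t) ^ 2 := by
        unfold exPhi
        gcongr
    _ = exPhi t / s := by unfold exPhi; ring

theorem exPhi_sq_div_log_cube_le {t : ℝ} (ht : 0 ≤ t) :
    exPhi (t ^ 2 / log (exp 1 + t) ^ 3) ≤ 4 * t ^ 2 := by
  set L := log (exp 1 + t)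
  have hL : 1 ≤ L := one_le_log_exp_one_add ht
  set v := t ^ 2 / L ^ 3
  have hv0 : 0 ≤ v := by positivity
  have hv : v ≤ t ^ 2 := div_le_self (sq_nonneg t) (one_le_pow₀ hL)
  have hlog : log (exp 1 + v) ≤ 2 * L := by
    calc log (exp 1 + v) ≤ log ((exp 1 + t) ^ 2) := by
          refine log_le_log (by positivity) ?_
          nlinarith [add_one_le_exp (1 : ℝ), exp_pos 1]
      _ = 2 * L := by rw [log_pow]; norm_num [L]
  calc exPhi v ≤ v * (2 * L) ^ 2 := by
        unfold exPhi
        have := one_le_log_exp_one_add hv0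
        gcongr
    _ = 4 * t ^ 2 / L := by simp only [v]; field_simp; ring
    _ ≤ 4 * t ^ 2 := div_le_self (by positivity) hL

noncomputable def expWindow (n : ℕ) : Set ℝ := Ioo (exp n) (exp n + n)

noncomputable def uBlock (n : ℕ) : Set ℝ := Ioo (exp n + n - 1) (exp n + n)

noncomputable def sigmaBlock (n : ℕ) : Set ℝ := Ioo (exp n) (exp n + 1)

noncomputable def sigmaSupport : Set ℝ := ⋃ n ≥ 2, sigmaBlock n

theorem uBlock_subset_expWindow {n : ℕ} (hn : 1 ≤ n) : uBlock n ⊆ expWindow n := by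
  have : (1 : ℝ) ≤ n := by exact_mod_cast hn
  exact Ioo_subset_Ioo (by linarith) le_rfl

theorem sigmaBlock_subset_expWindow {n : ℕ} (hn : 1 ≤ n) : sigmaBlock n ⊆ expWindow n := by
  have : (1 : ℝ) ≤ n := by exact_mod_cast hn
  exact Ioo_subset_Ioo le_rfl (by linarith)

theorem le_of_mem_expWindow {m n : ℕ} {x y : ℝ} (hx : x ∈ expWindow n) (hy : y ∈ expWindow m)
    (h : 3 * y < 4 * x) : m ≤ n := by
  by_contra! hnm
  have hmn : (n : ℝ) + 1 ≤ m := by exact_mod_cast hnm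
  -- `4x < 4 (eⁿ + n) ≤ 8 eⁿ < 3 e eⁿ ≤ 3 eᵐ < 3y`
  have hgrowth : exp 1 * exp n ≤ exp m := by
    rw [← exp_add]
    exact exp_le_exp.2 (by linarith)
  have hn : (n : ℝ) ≤ exp n := by linarith [add_one_le_exp (n : ℝ)]
  have he : 8 / 3 < exp 1 := by linarith [exp_one_gt_d9]
  nlinarith [hx.2, hy.1, exp_pos (n : ℝ)]

theorem eq_of_mem_expWindow {m n : ℕ} {x y : ℝ} (hx : x ∈ expWindow n) (hy : y ∈ expWindow m)
    (hxy : 3 * x < 4 * y) (hyx : 3 * y < 4 * x) : n = m :=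
  le_antisymm (le_of_mem_expWindow hy hx hxy) (le_of_mem_expWindow hx hy hyx)

theorem eq_of_mem_expWindow_of_mem_Ioo {m n : ℕ} {a b x y : ℝ} (hshort : 3 * b < 4 * a)
    (hx : x ∈ expWindow n) (hy : y ∈ expWindow m) (hxQ : x ∈ Ioo a b) (hyQ : y ∈ Ioo a b) :
    n = m :=
  eq_of_mem_expWindow hx hy (by linarith [hxQ.2, hyQ.1]) (by linarith [hxQ.1, hyQ.2])

theorem eq_of_mem_expWindow_of_mem {m n : ℕ} {x : ℝ} (hn : x ∈ expWindow n)
    (hm : x ∈ expWindow m) : m = n := by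
  have : 0 < x := (exp_pos _).trans hn.1
  exact eq_of_mem_expWindow hm hn (by linarith) (by linarith)

theorem exU_of_mem_uBlock {n : ℕ} {x : ℝ} (hn : 2 ≤ n) (hx : x ∈ uBlock n) :
    exU x = n ^ 2 / log (exp 1 + n) ^ 3 :=
  tsum_ite_indicator_of_mem (s := uBlock)
    (fun m hm hxm => eq_of_mem_expWindow_of_mem (uBlock_subset_expWindow (by omega) hx)
      (uBlock_subset_expWindow (by omega) hxm)) hn hx

theorem exU_of_forall_notMem {x : ℝ} (hx : ∀ n, 2 ≤ n → x ∉ uBlock n) : exU x = 0 :=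
  tsum_ite_indicator_of_forall_notMem (s := uBlock) hx

theorem exSigma_eq_indicator : exSigma = sigmaSupport.indicator 1 := by
  funext x
  by_cases h : ∃ n, 2 ≤ n ∧ x ∈ sigmaBlock n
  · obtain ⟨n, hn, hx⟩ := h
    have hxσ : x ∈ sigmaSupport := mem_iUnion₂.2 ⟨n, hn, hx⟩
    rw [indicator_of_mem hxσ]
    exact tsum_ite_indicator_of_mem (s := sigmaBlock)
      (fun m hm hxm => eq_of_mem_expWindow_of_mem (sigmaBlock_subset_expWindow (by omega) hx)
        (sigmaBlock_subset_expWindow (by omega) hxm)) hn hx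
  · push Not at h
    rw [indicator_of_notMem (by simpa [sigmaSupport] using h)]
    exact tsum_ite_indicator_of_forall_notMem (s := sigmaBlock) h

theorem setIntegral_exSigma (a b : ℝ) :
    ∫ x in Ioo a b, exSigma x = volume.real (sigmaSupport ∩ Ioo a b) := by
  have hσ : MeasurableSet sigmaSupport :=
    MeasurableSet.iUnion fun _ => MeasurableSet.iUnion fun _ => measurableSet_Ioo
  rw [exSigma_eq_indicator, integral_indicator_one hσ, measureReal_restrict_apply hσ]

theorem exPhi_abs_exU_le {x K : ℝ} (hK : ∀ n, 2 ≤ n → x ∈ uBlock n → (n : ℝ) ≤ K) :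
    exPhi |exU x| ≤ 4 * K ^ 2 := by
  by_cases h : ∃ n, 2 ≤ n ∧ x ∈ uBlock n
  · obtain ⟨n, hn, hx⟩ := h
    have := one_le_log_exp_one_add (Nat.cast_nonneg (α := ℝ) n)
    rw [exU_of_mem_uBlock hn hx, abs_of_nonneg (by positivity)]
    calc _ ≤ 4 * (n : ℝ) ^ 2 := exPhi_sq_div_log_cube_le (Nat.cast_nonneg n)
      _ ≤ 4 * K ^ 2 := by gcongr; exact hK n hn hx
  · push Not at h
    rw [exU_of_forall_notMem h, abs_zero, exPhi_zero]
    positivity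

theorem setLIntegral_exPhi_exU_le {E : Set ℝ} {s : Finset ℕ} {K : ℝ}
    (hE : ∀ x ∈ E, ∀ n, 2 ≤ n → x ∈ uBlock n → n ∈ s) (hK : ∀ n ∈ s, (n : ℝ) ≤ K) :
    ∫⁻ x in E, ENNReal.ofReal (exPhi |exU x|) ≤
      ENNReal.ofReal (4 * K ^ 2) * volume ((⋃ n ∈ s, uBlock n) ∩ E) := by
  refine setLIntegral_ofReal_le_mul (s.measurableSet_biUnion fun _ _ => measurableSet_Ioo)
    (fun x hx => exPhi_abs_exU_le fun n hn hxn => hK n (hE x hx n hn hxn)) fun x hx hxU => ?_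
  have hx0 : exU x = 0 :=
    exU_of_forall_notMem fun n hn hxn => hxU (mem_biUnion (hE x hx n hn hxn) hxn)
  rw [hx0, abs_zero, exPhi_zero]

theorem setLIntegral_exPhi_exU_eq_zero {E : Set ℝ} (hE : ∀ x ∈ E, ∀ n, 2 ≤ n → x ∉ uBlock n) :
    ∫⁻ x in E, ENNReal.ofReal (exPhi |exU x|) = 0 :=
  le_antisymm ((setLIntegral_exPhi_exU_le (s := ∅) (K := 0)
    (fun x hx n hn hxn => absurd hxn (hE x hx n hn)) (by simp)).trans (by simp)) zero_le

theorem floor_log_cube_le {b : ℝ} (hb : 0 < b) : (⌊log b⌋₊ : ℝ) ^ 3 ≤ 6 * b := by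
  rcases le_or_gt 0 (log b) with hlog | hlog
  · have hcube : log b ^ 3 / 6 ≤ exp (log b) := by
      simpa [Nat.factorial] using pow_div_factorial_le_exp (log b) hlog 3
    calc (⌊log b⌋₊ : ℝ) ^ 3 ≤ log b ^ 3 := by gcongr; exact Nat.floor_le hlog
      _ ≤ 6 * b := by rw [exp_log hb] at hcube; linarith
  · rw [Nat.floor_of_nonpos hlog.le]
    norm_num [hb.le]

theorem setLIntegral_exPhi_exU_Ioo_le {a b : ℝ} (hb : 0 < b) :
    ∫⁻ x in Ioo a b, ENNReal.ofReal (exPhi |exU x|) ≤ ENNReal.ofReal (24 * b) := by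
  set N := ⌊log b⌋₊
  have hindex : ∀ x ∈ Ioo a b, ∀ n, 2 ≤ n → x ∈ uBlock n → n ∈ Finset.Icc 2 N := by
    intro x hx n hn hxn
    have hexp : exp n < b := ((uBlock_subset_expWindow (by omega) hxn).1).trans hx.2
    exact Finset.mem_Icc.2 ⟨hn, Nat.le_floor ((lt_log_iff_exp_lt hb).2 hexp).le⟩
  have hsupport : volume ((⋃ n ∈ Finset.Icc 2 N, uBlock n) ∩ Ioo a b) ≤ ENNReal.ofReal N :=
    calc volume ((⋃ n ∈ Finset.Icc 2 N, uBlock n) ∩ Ioo a b)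
        ≤ ∑ n ∈ Finset.Icc 2 N, volume (uBlock n) :=
          (measure_mono inter_subset_left).trans (measure_biUnion_finset_le _ _)
      _ = (Finset.Icc 2 N).card := by simp [uBlock, Real.volume_Ioo]
      _ ≤ ENNReal.ofReal N := by rw [ENNReal.ofReal_natCast, Nat.card_Icc]; gcongr; omega
  calc ∫⁻ x in Ioo a b, ENNReal.ofReal (exPhi |exU x|)
      ≤ ENNReal.ofReal (4 * N ^ 2) * ENNReal.ofReal N :=
        (setLIntegral_exPhi_exU_le (K := N) hindex fun n hn => by
          exact_mod_cast (Finset.mem_Icc.1 hn).2).trans (by gcongr)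
    _ ≤ ENNReal.ofReal (24 * b) := by
        rw [← ENNReal.ofReal_mul (by positivity)]
        exact ENNReal.ofReal_le_ofReal (by nlinarith [floor_log_cube_le hb])

theorem sigmaSupport_inter_Ioo_subset {a b y : ℝ} {m : ℕ} (hshort : 3 * b < 4 * a)
    (hm : 2 ≤ m) (hy : y ∈ sigmaBlock m) (hyQ : y ∈ Ioo a b) :
    sigmaSupport ∩ Ioo a b ⊆ sigmaBlock m ∩ Ioo a b := by
  rintro z ⟨hz, hzQ⟩
  obtain ⟨k, hk, hzk⟩ := mem_iUnion₂.1 hz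
  obtain rfl := eq_of_mem_expWindow_of_mem_Ioo hshort
    (sigmaBlock_subset_expWindow (by omega) hzk) (sigmaBlock_subset_expWindow (by omega) hy) hzQ hyQ
  exact ⟨hzk, hzQ⟩

theorem setLIntegral_exPhi_exU_mul_volume_le_of_short {a b y : ℝ} {m : ℕ}
    (hshort : 3 * b < 4 * a) (hm : 2 ≤ m) (hy : y ∈ sigmaBlock m) (hyQ : y ∈ Ioo a b) :
    (∫⁻ x in Ioo a b, ENNReal.ofReal (exPhi |exU x|)) * volume (sigmaSupport ∩ Ioo a b) ≤
      ENNReal.ofReal (36 * (b - a) ^ 2) := by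
  have hyW := sigmaBlock_subset_expWindow (by omega) hy
  by_cases hu : ∀ x ∈ Ioo a b, ∀ n, 2 ≤ n → x ∉ uBlock n
  · simp [setLIntegral_exPhi_exU_eq_zero hu]
  push Not at hu
  obtain ⟨x, hxQ, n, hn, hx⟩ := hu
  have hindex : ∀ x ∈ Ioo a b, ∀ n, 2 ≤ n → x ∈ uBlock n → n ∈ ({m} : Finset ℕ) :=
    fun x hxQ n hn hx => Finset.mem_singleton.2 <| eq_of_mem_expWindow_of_mem_Ioo hshort
      (uBlock_subset_expWindow (by omega) hx) hyW hxQ hyQ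
  obtain rfl : n = m := Finset.mem_singleton.1 (hindex x hxQ n hn hx)
  -- `a < y < eⁿ + 1` and `eⁿ + n - 1 < x < b`: `Q` spans the gap between the two blocks
  have hgap : (n : ℝ) < b - a + 2 := by linarith [hx.1, hy.2, hxQ.2, hyQ.1]
  set r := min 1 (b - a)
  have hX : ∫⁻ x in Ioo a b, ENNReal.ofReal (exPhi |exU x|) ≤
      ENNReal.ofReal (4 * n ^ 2) * ENNReal.ofReal r := by
    refine (setLIntegral_exPhi_exU_le (K := n) hindex (by simp)).trans ?_
    rw [Finset.set_biUnion_singleton]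
    gcongr
    exact (volume_Ioo_inter_Ioo_le a b _ _).trans_eq (by rw [sub_sub_cancel])
  have hY : volume (sigmaSupport ∩ Ioo a b) ≤ ENNReal.ofReal r := by
    refine (measure_mono (sigmaSupport_inter_Ioo_subset hshort hm hy hyQ)).trans ?_
    exact (volume_Ioo_inter_Ioo_le a b _ _).trans_eq (by rw [add_sub_cancel_left])
  have hr : 0 ≤ r := le_min zero_le_one (by linarith [hyQ.1, hyQ.2])
  have hnr : n * r ≤ 3 * (b - a) := by
    have : r ≤ 1 := min_le_left _ _
    have : r ≤ b - a := min_le_right _ _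
    nlinarith
  calc _ ≤ ENNReal.ofReal (4 * n ^ 2) * ENNReal.ofReal r * ENNReal.ofReal r := by gcongr
    _ = ENNReal.ofReal (4 * (n * r) ^ 2) := by
        rw [← ENNReal.ofReal_mul (by positivity), ← ENNReal.ofReal_mul (by positivity)]
        ring_nf
    _ ≤ ENNReal.ofReal (36 * (b - a) ^ 2) :=
        ENNReal.ofReal_le_ofReal (by nlinarith [mul_nonneg (Nat.cast_nonneg (α := ℝ) n) hr])

theorem setLIntegral_exPhi_exU_mul_setIntegral_exSigma_le {a b : ℝ} :
    (∫⁻ x in Ioo a b, ENNReal.ofReal (exPhi |exU x|)) *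
        ENNReal.ofReal (∫ x in Ioo a b, exSigma x) ≤ ENNReal.ofReal (96 * (b - a) ^ 2) := by
  rw [setIntegral_exSigma, ofReal_measureReal (measure_ne_top_of_subset inter_subset_right
    (by simp))]
  rcases eq_zero_or_pos (volume (sigmaSupport ∩ Ioo a b)) with hσ | hσ
  · simp [hσ]
  obtain ⟨y, hyσ, hyQ⟩ := nonempty_of_measure_ne_zero hσ.ne'
  obtain ⟨m, hm, hy⟩ := mem_iUnion₂.1 hyσ
  rcases le_or_gt (4 * a) (3 * b) with hlong | hshort
  · have hb : 0 < b := (exp_pos _).trans (hy.1.trans hyQ.2)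
    calc _ ≤ ENNReal.ofReal (24 * b) * ENNReal.ofReal (b - a) := by
          gcongr
          · exact setLIntegral_exPhi_exU_Ioo_le hb
          · exact (measure_mono inter_subset_right).trans_eq (Real.volume_Ioo)
      _ ≤ ENNReal.ofReal (96 * (b - a) ^ 2) := by
          rw [← ENNReal.ofReal_mul (by positivity)]
          exact ENNReal.ofReal_le_ofReal (by nlinarith)
  · exact (setLIntegral_exPhi_exU_mul_volume_le_of_short hshort hm hy hyQ).trans
      (ENNReal.ofReal_le_ofReal (by nlinarith))

theorem luxNorm_exU_le {a b : ℝ} (hab : a < b) (hS : 0 < ∫ x in Ioo a b, exSigma x) :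
    luxNorm volume exPhi (Ioo a b) exU ≤ max 1 (96 * (b - a) / ∫ x in Ioo a b, exSigma x) := by
  set S := ∫ x in Ioo a b, exSigma x
  refine luxNorm_le_of_lintegral_le (fun t ht s hs => exPhi_div_le ht hs) (le_max_left _ _) ?_
  calc ∫⁻ x in Ioo a b, ENNReal.ofReal (exPhi |exU x|)
      ≤ ENNReal.ofReal (96 * (b - a) ^ 2) / ENNReal.ofReal S :=
        (ENNReal.le_div_iff_mul_le (by simp [hS]) (by simp)).2
          setLIntegral_exPhi_exU_mul_setIntegral_exSigma_le
    _ = ENNReal.ofReal (96 * (b - a) / S) * ENNReal.ofReal (b - a) := by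
        have : 0 < b - a := sub_pos.2 hab
        rw [← ENNReal.ofReal_div_of_pos hS, ← ENNReal.ofReal_mul (by positivity)]
        congr 1
        ring
    _ ≤ ENNReal.ofReal (max 1 (96 * (b - a) / S)) * volume (Ioo a b) := by
        rw [Real.volume_Ioo]
        gcongr
        exact le_max_right _ _

/-- The separated bump quantity `sup_Q ‖u‖_{Φ,Q} ‖σ‖_{1,Q}` is finite: there is `C` with
`‖u‖_{Φ,Q} · (|Q|⁻¹ ∫_Q σ) ≤ C` for every bounded interval `Q`. -/
theorem separated_bump_holds :
    ∃ C : ℝ, 0 < C ∧ ∀ a b : ℝ, a < b →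
      luxNorm volume exPhi (Set.Ioo a b) exU *
        ((b - a)⁻¹ * ∫ x in Set.Ioo a b, exSigma x) ≤ C := by
  refine ⟨96, by norm_num, fun a b hab => ?_⟩
  have hQ : 0 < b - a := sub_pos.2 hab
  have hS_eq := setIntegral_exSigma a b
  set S := ∫ x in Ioo a b, exSigma x
  have hS : S ≤ b - a := by
    rw [hS_eq, ← Real.volume_real_Ioo_of_le hab.le]
    exact measureReal_mono inter_subset_right (by simp)
  rcases (hS_eq ▸ measureReal_nonneg : 0 ≤ S).eq_or_lt with h0 | hSpos
  · rw [← h0, mul_zero, mul_zero]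
    norm_num
  calc luxNorm volume exPhi (Ioo a b) exU * ((b - a)⁻¹ * S)
      ≤ max 1 (96 * (b - a) / S) * ((b - a)⁻¹ * S) := by
        gcongr
        exact luxNorm_exU_le hab hSpos
    _ = max ((b - a)⁻¹ * S) 96 := by
        rw [max_mul_of_nonneg _ _ (by positivity), one_mul]
        congr 1
        field_simp
    _ ≤ 96 := max_le (by rw [inv_mul_le_iff₀ hQ]; linarith) le_rfl
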